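/- arXiv:2509.25921 — 3 statements merged into one kernel-verified Lean document; each statement's English description precedes it below -/
import Mathlib

section
/- Under the assumptions that (i) $w_i u_i(a) < 1$ for all $i,a$, (ii) $W$ has a unique maximizer $a^*$ on $A_\lambda$, and (iii) $\epsilon < (M+\delta)^{-1/\Delta_1}$ for some $\delta > 0$, where $M = |A_\lambda|$ and $\Delta_1 = W(a^*) - \max_{a \in A_\lambda, a \neq a^*} W(a)$, the separation inequality $\theta(a^*) - \xi > \sum_{a \in A_\lambda, a \neq a^*} (\theta(a) + \xi)$ holds, where $\xi = \frac{\delta}{|A| M} \epsilon^{n - \max_{a \neq a^*, a \in A_\lambda} W(a)}$. -/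
open Finset
open scoped Classical

/-! With `s = ε ^ (n - W₂) / |A|`, every `θ a` with `a ≠ a*` is at most `s`, while
`θ a* = ε ^ (-Δ₁) * s` and condition (iii) says exactly `ε ^ (-Δ₁) > M + δ`. As `ξ = δ s / M`,
the `M - 1` raised values and `ξ` together total at most `(M - 1) s + δ s < (M + δ) s < θ a*`. -/

theorem lt_rpow_neg_of_lt_rpow_neg_inv {x ε Δ : ℝ} (hx : 0 ≤ x) (hε : 0 < ε) (hΔ : 0 < Δ)
    (h : ε < x ^ (-(1 / Δ))) : x < ε ^ (-Δ) := by
  have h' := Real.rpow_lt_rpow_of_neg hε h (neg_neg_of_pos hΔ)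
  rwa [← Real.rpow_mul hx, neg_mul_neg, one_div_mul_cancel hΔ.ne', Real.rpow_one] at h'

theorem sum_erase_add_lt_sub {ι : Type*} [DecidableEq ι] {S : Finset ι} {f : ι → ℝ}
    {a₀ : ι} (ha₀ : a₀ ∈ S) {s δ ξ : ℝ} (hs : 0 ≤ s) (hle : ∀ a ∈ S.erase a₀, f a ≤ s)
    (htop : (#S + δ) * s < f a₀) (hξ : ξ = δ * s / #S) :
    ∑ a ∈ S.erase a₀, (f a + ξ) < f a₀ - ξ := by
  have hcard : (#(S.erase a₀) : ℝ) = #S - 1 := by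
    rw [card_erase_of_mem ha₀, Nat.cast_pred (card_pos.mpr ⟨a₀, ha₀⟩)]
  have hS : (#S : ℝ) ≠ 0 := by exact_mod_cast (card_pos.mpr ⟨a₀, ha₀⟩).ne'
  have hsum : ∑ a ∈ S.erase a₀, (f a + ξ) ≤ (#S - 1) * (s + ξ) := by
    rw [← hcard, ← nsmul_eq_mul]
    exact sum_le_card_nsmul _ _ _ fun a ha => by linarith [hle a ha]
  have hmξ : #S * ξ = δ * s := by rw [hξ]; field_simp
  have hrearrange : (#S - 1) * (s + ξ) = (#S + δ) * s - s - ξ := by linear_combination hmξ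
  linarith

theorem sbcpe_separation_lemma_general
    {n : ℕ}
    (A : Fin n → Type*) [∀ i, Fintype (A i)]
    (ε : ℝ) (hε0 : 0 < ε) (hε1 : ε < 1)
    (W : (∀ i, A i) → ℝ)
    (Alam : Finset (∀ i, A i))
    (θ : (∀ i, A i) → ℝ)
    (hθ : ∀ a, θ a =
      if a ∈ Alam then ε ^ ((n : ℝ) - W a) / (Fintype.card (∀ i, A i) : ℝ) else 0)
    (astar : ∀ i, A i) (hstar : astar ∈ Alam)
    (hmax : ∀ a ∈ Alam, a ≠ astar → W a < W astar)
    (M : ℕ) (hM : M = Alam.card)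
    (W2 : ℝ) (hW2ub : ∀ a ∈ Alam.erase astar, W a ≤ W2)
    (hW2mem : ∃ a ∈ Alam.erase astar, W a = W2)
    (Δ₁ : ℝ) (hΔ₁ : Δ₁ = W astar - W2)
    (δ : ℝ) (hδ : 0 < δ)
    (hεsmall : ε < ((M : ℝ) + δ) ^ (-(1 / Δ₁)))
    (ξ : ℝ)
    (hξ : ξ = δ / ((Fintype.card (∀ i, A i) : ℝ) * M) * ε ^ ((n : ℝ) - W2)) :
    θ astar - ξ > ∑ a ∈ Alam.erase astar, (θ a + ξ) := by
  subst hM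
  obtain ⟨b, hb, rfl⟩ := hW2mem
  have hΔ₁pos : 0 < Δ₁ := hΔ₁ ▸ sub_pos.mpr (hmax b (mem_of_mem_erase hb) (ne_of_mem_erase hb))
  have hgap := lt_rpow_neg_of_lt_rpow_neg_inv (by positivity) hε0 hΔ₁pos hεsmall
  set C : ℝ := ((Fintype.card (∀ i, A i) : ℕ) : ℝ)
  have hC : 0 < C := Nat.cast_pos.mpr (Fintype.card_pos_iff.mpr ⟨astar⟩)
  set s := ε ^ ((n : ℝ) - W b) / C
  have hθstar : θ astar = ε ^ (-Δ₁) * s := by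
    rw [hθ, if_pos hstar, mul_div_assoc', ← Real.rpow_add hε0, hΔ₁]
    ring_nf
  have hθle : ∀ a ∈ Alam.erase astar, θ a ≤ s := fun a ha => by
    rw [hθ, if_pos (mem_of_mem_erase ha)]
    exact div_le_div_of_nonneg_right
      (Real.rpow_le_rpow_of_exponent_ge hε0 hε1.le (by linarith [hW2ub a ha])) hC.le
  refine sum_erase_add_lt_sub hstar (by positivity) hθle ?_ (by rw [hξ]; simp only [s]; field_simp)
  rw [hθstar]
  exact mul_lt_mul_of_pos_right hgap (by positivity)

/-- Lemma 1, separation: under Assumption 1 (i)-(iii), with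
`M = |A_λ|`, `Δ₁ = W(a*) - max_{a ∈ A_λ, a ≠ a*} W(a)` and
`ξ = (δ/(|A| M)) ε^(n - max_{a ≠ a*} W(a))`, we have
`θ(a*) - ξ > ∑_{a ∈ A_λ, a ≠ a*} (θ(a) + ξ)`. -/
theorem sbcpe_separation_lemma
    {n : ℕ} (hn : 0 < n)
    (A : Fin n → Type*) [∀ i, Fintype (A i)] [∀ i, Nonempty (A i)]
    (u : Fin n → (∀ i, A i) → ℝ) (w : Fin n → ℝ) (lam : Fin n → ℝ)
    (hw : ∀ i, 0 < w i)
    (ε : ℝ) (hε0 : 0 < ε) (hε1 : ε < 1)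
    (W : (∀ i, A i) → ℝ) (hW : ∀ a, W a = ∑ i, w i * u i a)
    (Alam : Finset (∀ i, A i))
    (hAlam : ∀ a, a ∈ Alam ↔ ∀ i, lam i < u i a)
    (θ : (∀ i, A i) → ℝ)
    (hθ : ∀ a, θ a =
      if a ∈ Alam then ε ^ ((n : ℝ) - W a) / (Fintype.card (∀ i, A i) : ℝ) else 0)
    (hbound : ∀ i a, w i * u i a < 1)
    (astar : ∀ i, A i) (hstar : astar ∈ Alam)
    (hmax : ∀ a ∈ Alam, a ≠ astar → W a < W astar)
    (M : ℕ) (hM : M = Alam.card) (hM2 : 2 ≤ M)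
    (W2 : ℝ) (hW2ub : ∀ a ∈ Alam.erase astar, W a ≤ W2)
    (hW2mem : ∃ a ∈ Alam.erase astar, W a = W2)
    (Δ₁ : ℝ) (hΔ₁ : Δ₁ = W astar - W2)
    (δ : ℝ) (hδ : 0 < δ)
    (hεsmall : ε < ((M : ℝ) + δ) ^ (-(1 / Δ₁)))
    (ξ : ℝ)
    (hξ : ξ = δ / ((Fintype.card (∀ i, A i) : ℝ) * M) * ε ^ ((n : ℝ) - W2)) :
    θ astar - ξ > ∑ a ∈ Alam.erase astar, (θ a + ξ) :=
  sbcpe_separation_lemma_general A ε hε0 hε1 W Alam θ hθ astar hstar hmax M hM W2 hW2ub hW2mem Δ₁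
    hΔ₁ δ hδ hεsmall ξ hξ
end

section
/- Suppose $\theta : A \to [0,\infty)$ satisfies $\theta(a^*) - \xi > \sum_{a \neq a^*}(\theta(a) + \xi)$ for some $\xi > 0$ and a distinguished joint action $a^* \in A = \prod_{i=1}^n A_i$. If $\widehat\theta : A \to [0,\infty)$ satisfies $|\widehat\theta(a) - \theta(a)| < \xi$ for all $a \in A$, then for every agent $i$, the marginal $\widehat\theta_i(a_i) = \sum_{a : a_i \text{-component} = a_i} \widehat\theta(a)$ is uniquely maximized at $a_i^*$ (the $i$-th component of $a^*$); consequently the profile of local argmaxes equals $a^*$. -/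
/-!
Errors below `ξ` keep `θ̂(a*)` above the total `θ̂`-mass of all other profiles. A marginal
`θ̂ᵢ(b)` with `b ≠ a*ᵢ` sums only such profiles, while `θ̂ᵢ(a*ᵢ)` contains `θ̂(a*)` itself.
-/

open Finset
open scoped Classical

lemma sum_lt_of_sum_add_lt_sub_of_abs_sub_lt {α : Type*} {θ θhat : α → ℝ} {ξ : ℝ}
    {s : Finset α} {x : α} (hsep : ∑ a ∈ s, (θ a + ξ) < θ x - ξ)
    (hest : ∀ a, |θhat a - θ a| < ξ) :
    ∑ a ∈ s, θhat a < θhat x :=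
  calc ∑ a ∈ s, θhat a
      ≤ ∑ a ∈ s, (θ a + ξ) := sum_le_sum fun a _ => by linarith [(abs_lt.mp (hest a)).2]
    _ < θ x - ξ := hsep
    _ < θhat x := by linarith [(abs_lt.mp (hest x)).1]

lemma sum_fiber_lt_sum_fiber_of_dominant {α β : Type*} [Fintype α] [DecidableEq α]
    [DecidableEq β] (f : α → β) {w : α → ℝ} (hw : ∀ a, 0 ≤ w a)
    {x : α} (hx : ∑ a ∈ univ.filter (· ≠ x), w a < w x)
    {b : β} (hb : b ≠ f x) :
    ∑ a ∈ univ.filter (fun a => f a = b), w a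
      < ∑ a ∈ univ.filter (fun a => f a = f x), w a := by
  have hsub : univ.filter (fun a => f a = b) ⊆ univ.filter (· ≠ x) := by
    intro a ha
    simp only [mem_filter, mem_univ, true_and] at ha ⊢
    rintro rfl
    exact hb ha.symm
  calc ∑ a ∈ univ.filter (fun a => f a = b), w a
      ≤ ∑ a ∈ univ.filter (· ≠ x), w a :=
        sum_le_sum_of_subset_of_nonneg hsub fun a _ _ => hw a
    _ < w x := hx
    _ ≤ ∑ a ∈ univ.filter (fun a => f a = f x), w a :=
      single_le_sum (fun a _ => hw a) (by simp)

theorem sbcpe_marginal_argmax_eq_joint_general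
    {n : ℕ} (A : Fin n → Type*) [∀ i, Fintype (A i)]
    (θ θhat : (∀ i, A i) → ℝ)
    (hθhat0 : ∀ a, 0 ≤ θhat a)
    (astar : ∀ i, A i) (ξ : ℝ)
    (hsep : θ astar - ξ > ∑ a ∈ univ.filter (fun a => a ≠ astar), (θ a + ξ))
    (hest : ∀ a, |θhat a - θ a| < ξ) :
    (∀ i, ∀ b : A i, b ≠ astar i →
      ∑ a ∈ univ.filter (fun a => a i = b), θhat a
        < ∑ a ∈ univ.filter (fun a => a i = astar i), θhat a) ∧
    (∀ abar : ∀ i, A i,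
      (∀ i, ∀ b : A i,
        ∑ a ∈ univ.filter (fun a => a i = b), θhat a
          ≤ ∑ a ∈ univ.filter (fun a => a i = abar i), θhat a) →
      abar = astar) := by
  have hdom : ∑ a ∈ univ.filter (· ≠ astar), θhat a < θhat astar :=
    sum_lt_of_sum_add_lt_sub_of_abs_sub_lt hsep hest
  have hunique : ∀ i, ∀ b : A i, b ≠ astar i →
      ∑ a ∈ univ.filter (fun a => a i = b), θhat a
        < ∑ a ∈ univ.filter (fun a => a i = astar i), θhat a :=
    fun i _ hb => sum_fiber_lt_sum_fiber_of_dominant (fun a => a i) hθhat0 hdom hb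
  refine ⟨hunique, fun abar hmax => funext fun i => ?_⟩
  by_contra h
  exact (hmax i (astar i)).not_gt (hunique i (abar i) h)

/-- Proposition 1: if `θ(a*) - ξ > ∑_{a ≠ a*}(θ(a) + ξ)` and
`|θ̂(a) - θ(a)| < ξ` for all `a`, then for every agent `i` the marginal
`θ̂ᵢ(aᵢ) = ∑_{a : aᵢ-component = aᵢ} θ̂(a)` is uniquely maximized at `a*ᵢ`;
consequently the profile of local argmaxes equals `a*`. -/
theorem sbcpe_marginal_argmax_eq_joint
    {n : ℕ} (A : Fin n → Type*) [∀ i, Fintype (A i)] [∀ i, Nonempty (A i)]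
    (θ θhat : (∀ i, A i) → ℝ)
    (hθ0 : ∀ a, 0 ≤ θ a) (hθhat0 : ∀ a, 0 ≤ θhat a)
    (astar : ∀ i, A i) (ξ : ℝ) (hξ : 0 < ξ)
    (hsep : θ astar - ξ > ∑ a ∈ univ.filter (fun a => a ≠ astar), (θ a + ξ))
    (hest : ∀ a, |θhat a - θ a| < ξ) :
    (∀ i, ∀ b : A i, b ≠ astar i →
      ∑ a ∈ univ.filter (fun a => a i = b), θhat a
        < ∑ a ∈ univ.filter (fun a => a i = astar i), θhat a) ∧
    (∀ abar : ∀ i, A i,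
      (∀ i, ∀ b : A i,
        ∑ a ∈ univ.filter (fun a => a i = b), θhat a
          ≤ ∑ a ∈ univ.filter (fun a => a i = abar i), θhat a) →
      abar = astar) :=
  sbcpe_marginal_argmax_eq_joint_general A θ θhat hθhat0 astar ξ hsep hest
end

section
/- Let $\widehat\theta(a^*) > \theta(a^*) - \xi$ and $\widehat\theta(a) < \theta(a) + \xi$ for all $a \neq a^*$, and assume $\theta(a^*) - \xi > \sum_{a \neq a^*}(\theta(a)+\xi)$. Then for any agent $i$ and any $\tilde a_i \neq a_i^*$, $\widehat\theta_i(a_i^*) > \widehat\theta_i(\tilde a_i)$, i.e., the marginal at the optimal component strictly exceeds the marginal at any other component. -/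
open Finset
open scoped Classical

/-! The fibre of `a*` in coordinate `i` contains `a*`, whose estimated weight alone exceeds the
bounds `θ a + ξ` summed over all other profiles, while every other fibre avoids `a*`. -/

theorem sum_lt_sum_of_bound_sum_lt_apply {α : Type*} [Fintype α] [DecidableEq α]
    {f g : α → ℝ} {a₀ : α} (hf : ∀ a, 0 ≤ f a) (hg : ∀ a, 0 ≤ g a) (hfg : ∀ a, a ≠ a₀ → f a ≤ g a)
    (hdom : ∑ a ∈ univ.filter (fun a => a ≠ a₀), g a < f a₀)
    {s t : Finset α} (hs : a₀ ∈ s) (ht : a₀ ∉ t) :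
    ∑ a ∈ t, f a < ∑ a ∈ s, f a := by
  have hne : ∀ a ∈ t, a ≠ a₀ := fun a ha h => ht (h ▸ ha)
  calc ∑ a ∈ t, f a
      ≤ ∑ a ∈ t, g a := sum_le_sum fun a ha => hfg a (hne a ha)
    _ ≤ ∑ a ∈ univ.filter (fun a => a ≠ a₀), g a :=
        sum_le_sum_of_subset_of_nonneg (fun a ha => mem_filter.2 ⟨mem_univ a, hne a ha⟩)
          fun a _ _ => hg a
    _ < f a₀ := hdom
    _ ≤ ∑ a ∈ s, f a := single_le_sum (fun a _ => hf a) hs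

theorem sbcpe_marginal_dominance_general
    {n : ℕ} (A : Fin n → Type*) [∀ i, Fintype (A i)]
    (θ θhat : (∀ i, A i) → ℝ)
    (hθ0 : ∀ a, 0 ≤ θ a) (hθhat0 : ∀ a, 0 ≤ θhat a)
    (astar : ∀ i, A i) (ξ : ℝ) (hξ : 0 < ξ)
    (hlow : θhat astar > θ astar - ξ)
    (hup : ∀ a, a ≠ astar → θhat a < θ a + ξ)
    (hsep : θ astar - ξ > ∑ a ∈ univ.filter (fun a => a ≠ astar), (θ a + ξ)) :
    ∀ i, ∀ atilde : A i, atilde ≠ astar i →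
      ∑ a ∈ univ.filter (fun a => a i = astar i), θhat a
        > ∑ a ∈ univ.filter (fun a => a i = atilde), θhat a := by
  intro i atilde hne
  have hs : astar ∈ univ.filter (fun a => a i = astar i) := by simp
  have ht : astar ∉ univ.filter (fun a => a i = atilde) := by simpa using hne.symm
  exact sum_lt_sum_of_bound_sum_lt_apply hθhat0 (fun a => add_nonneg (hθ0 a) hξ.le)
    (fun a ha => (hup a ha).le) (hsep.trans hlow) hs ht

/-- if `θ̂(a*) > θ(a*) - ξ`, `θ̂(a) < θ(a) + ξ` for all `a ≠ a*`, and
`θ(a*) - ξ > ∑_{a ≠ a*}(θ(a) + ξ)`, then for any agent `i` and any `ãᵢ ≠ a*ᵢ`, the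
marginal satisfies `θ̂ᵢ(a*ᵢ) > θ̂ᵢ(ãᵢ)`. -/
theorem sbcpe_marginal_dominance
    {n : ℕ} (A : Fin n → Type*) [∀ i, Fintype (A i)] [∀ i, Nonempty (A i)]
    (θ θhat : (∀ i, A i) → ℝ)
    (hθ0 : ∀ a, 0 ≤ θ a) (hθhat0 : ∀ a, 0 ≤ θhat a)
    (astar : ∀ i, A i) (ξ : ℝ) (hξ : 0 < ξ)
    (hlow : θhat astar > θ astar - ξ)
    (hup : ∀ a, a ≠ astar → θhat a < θ a + ξ)
    (hsep : θ astar - ξ > ∑ a ∈ univ.filter (fun a => a ≠ astar), (θ a + ξ)) :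
    ∀ i, ∀ atilde : A i, atilde ≠ astar i →
      ∑ a ∈ univ.filter (fun a => a i = astar i), θhat a
        > ∑ a ∈ univ.filter (fun a => a i = atilde), θhat a :=
  sbcpe_marginal_dominance_general A θ θhat hθ0 hθhat0 astar ξ hξ hlow hup hsep
end
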